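/- For the Fibonacci word f, the grouping s₀ = 01 ↦ 0, s₁ = 0 ↦ 1 maps f back to itself: the sequence of block types read off from the canonical decomposition of f into blocks 01 and 0 is again f. -/
import Mathlib


/-- The Fibonacci substitution 0 → 01, 1 → 0 on words over {0,1}. -/
def fibSubst (l : List (Fin 2)) : List (Fin 2) :=
  l.flatMap fun a => if a = 0 then [0, 1] else [0]

/-- The Fibonacci word, fixed point of the substitution 0 → 01, 1 → 0 starting from 0. -/
def fibWord (n : ℕ) : Fin 2 := ((fibSubst^[n + 2]) [0]).getD n 0

/-- Start position of the k-th block in the canonical decomposition of the Fibonacci word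
into blocks 01 and 0: a block starting at position `b` has length 2 if it is the block 01
(i.e. the next letter is 1) and length 1 if it is the single-letter block 0. -/
def fibBlockStart : ℕ → ℕ
  | 0 => 0
  | k + 1 => fibBlockStart k + (if fibWord (fibBlockStart k + 1) = 1 then 2 else 1)

namespace FibAux

def W (n : ℕ) : List (Fin 2) := fibSubst^[n] [0]

lemma fibSubst_append (a b : List (Fin 2)) :
    fibSubst (a ++ b) = fibSubst a ++ fibSubst b := by
  simp [fibSubst]

lemma prefix_fibSubst {a b : List (Fin 2)} (h : a <+: b) : fibSubst a <+: fibSubst b := by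
  obtain ⟨t, rfl⟩ := h
  exact ⟨fibSubst t, (fibSubst_append a t).symm⟩

lemma W_succ (n : ℕ) : W (n + 1) = fibSubst (W n) := Function.iterate_succ_apply' _ _ _

lemma W_prefix_succ (n : ℕ) : W n <+: W (n + 1) := by
  induction n with
  | zero => exact ⟨[1], rfl⟩
  | succ n ih => rw [W_succ, W_succ]; exact prefix_fibSubst ih

lemma W_prefix {m n : ℕ} (h : m ≤ n) : W m <+: W n := by
  induction n with
  | zero => rw [Nat.le_zero.mp h]
  | succ n ih =>
    rcases Nat.lt_or_ge m (n + 1) with h' | h'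
    · exact (ih (Nat.lt_succ_iff.mp h')).trans (W_prefix_succ n)
    · rw [le_antisymm h h']

lemma length_le_fibSubst (l : List (Fin 2)) : l.length ≤ (fibSubst l).length := by
  induction l with
  | nil => simp [fibSubst]
  | cons a l ih =>
    have : fibSubst (a :: l) = (if a = 0 then [0, 1] else [0]) ++ fibSubst l := by
      simp [fibSubst]
    rw [this, List.length_append]
    split <;> simp <;> omega

lemma W_length (n : ℕ) : n < (W n).length := by
  induction n with
  | zero => simp [W]
  | succ n ih =>
    obtain ⟨t, ht⟩ := W_prefix (Nat.zero_le n)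
    have hW : W n = 0 :: t := by simpa [W] using ht.symm
    have h1 : W (n + 1) = [0, 1] ++ fibSubst t := by
      rw [W_succ, hW]
      simp [fibSubst]
    have h2 := length_le_fibSubst t
    have h3 : (W n).length = t.length + 1 := by simp [hW]
    rw [h1]
    simp only [List.length_append]
    simp only [List.length_cons, List.length_nil]
    omega

lemma getD_of_prefix {a b : List (Fin 2)} {n : ℕ} (h : a <+: b) (hn : n < a.length) :
    b.getD n 0 = a.getD n 0 := by
  obtain ⟨t, rfl⟩ := h
  rw [List.getD_append _ _ _ _ hn]

lemma fibWord_eq {n m : ℕ} (h : n < (W m).length) : fibWord n = (W m).getD n 0 := by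
  have h2 : n < (W (n + 2)).length := lt_trans (by omega) (W_length (n + 2))
  rcases le_total m (n + 2) with hm | hm
  · exact getD_of_prefix (W_prefix hm) h
  · exact (getD_of_prefix (W_prefix hm) h2).symm

def P (k : ℕ) : List (Fin 2) := fibSubst ((List.range k).map fibWord)

def L (k : ℕ) : ℕ := (P k).length

lemma P_succ (k : ℕ) : P (k + 1) = P k ++ fibSubst [fibWord k] := by
  rw [P, List.range_succ, List.map_append, fibSubst_append]
  rfl

lemma F_eq (k : ℕ) : (List.range k).map fibWord = (W (k + 2)).take k := by
  have hk : k ≤ (W (k + 2)).length := le_of_lt (lt_trans (by omega) (W_length (k + 2)))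
  apply List.ext_getElem
  · simp [hk]
  · intro i h1 h2
    simp only [List.length_map, List.length_range] at h1
    have hi : i < (W (k + 2)).length := lt_of_lt_of_le (lt_of_lt_of_le h1 hk) le_rfl
    simp only [List.getElem_map, List.getElem_range, List.getElem_take]
    rw [show fibWord i = (W (k + 2)).getD i 0 from fibWord_eq hi, List.getD_eq_getElem _ _ hi]

lemma P_prefix (k : ℕ) : P k <+: W (k + 3) := by
  have : W (k + 3) = fibSubst (W (k + 2)) := W_succ (k + 2)
  rw [this, P, F_eq]
  exact prefix_fibSubst (List.take_prefix k _)

lemma fibWord_P {k j : ℕ} (h : j < L k) : fibWord j = (P k).getD j 0 := by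
  have hp := P_prefix k
  have hj : j < (W (k + 3)).length := lt_of_lt_of_le h hp.length_le
  rw [fibWord_eq hj, getD_of_prefix hp h]

lemma fibSubst_single (a : Fin 2) :
    fibSubst [a] = 0 :: (if a = 0 then [1] else []) := by
  simp only [fibSubst, List.flatMap_cons, List.flatMap_nil, List.append_nil]
  split <;> rfl

lemma L_succ (k : ℕ) : L (k + 1) = L k + (if fibWord k = 0 then 2 else 1) := by
  rw [L, P_succ, List.length_append, fibSubst_single]
  split <;> simp [L]

lemma first_letter (k : ℕ) : fibWord (L k) = 0 := by
  have hlen : L k < L (k + 1) := by rw [L_succ]; split <;> omega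
  rw [fibWord_P hlen, P_succ, fibSubst_single, show L k = (P k).length from rfl,
    List.getD_append_right _ _ _ _ le_rfl]
  simp

lemma second_letter {k : ℕ} (h : fibWord k = 0) : fibWord (L k + 1) = 1 := by
  have hlen : L k + 1 < L (k + 1) := by rw [L_succ, if_pos h]; omega
  rw [fibWord_P hlen, P_succ, fibSubst_single, if_pos h, show L k = (P k).length from rfl,
    List.getD_append_right _ _ _ _ (Nat.le_succ _)]
  simp

lemma second_letter' {k : ℕ} (h : fibWord k = 1) : fibWord (L k + 1) = 0 := by
  have h0 : fibWord k ≠ 0 := by rw [h]; decide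
  have : L k + 1 = L (k + 1) := by rw [L_succ, if_neg h0]
  rw [this]
  exact first_letter (k + 1)

lemma fin_two_cases (a : Fin 2) : a = 0 ∨ a = 1 := by fin_cases a <;> simp

lemma fibBlockStart_eq (k : ℕ) : fibBlockStart k = L k := by
  induction k with
  | zero => simp [fibBlockStart, L, P, fibSubst]
  | succ k ih =>
    rw [fibBlockStart, ih, L_succ]
    congr 1
    rcases fin_two_cases (fibWord k) with h | h
    · rw [if_pos h, if_pos (second_letter h)]
    · rw [if_neg (show ¬fibWord (L k + 1) = 1 by rw [second_letter' h]; decide),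
        if_neg (show ¬fibWord k = 0 by rw [h]; decide)]

end FibAux

/-- The grouping s₀ = 01 ↦ 0, s₁ = 0 ↦ 1 maps the Fibonacci word back to itself:
the sequence of block types of the canonical decomposition is again the Fibonacci word. -/
theorem fibWord_self_similar :
    ∀ k : ℕ, (if fibWord (fibBlockStart k + 1) = 1 then (0 : Fin 2) else 1) = fibWord k := by
  intro k
  rw [FibAux.fibBlockStart_eq]
  rcases FibAux.fin_two_cases (fibWord k) with h | h
  · rw [if_pos (FibAux.second_letter h), h]
  · rw [if_neg (by rw [FibAux.second_letter' h]; decide), h]
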